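/- arXiv:2507.04898 — 4 statements merged into one kernel-verified Lean document; each statement's English description precedes it below -/
import Mathlib

section
/- Let A be a complex n×n matrix and h a complex m×n matrix. Then the following are equivalent: (i) for every x ∈ ℂⁿ, if h·Aᵏ·x = 0 for all natural numbers k < n, then x = 0; (ii) (Hautus test) for every λ ∈ ℂ and every v ∈ ℂⁿ with v ≠ 0 and A·v = λ·v, one has h·v ≠ 0. -/
/-!
The unobservable subspace `⋂ₖ ker (h Aᵏ)` is `A`-invariant and lies in `ker h`. By
Cayley–Hamilton every `Aᵏ` is a polynomial of degree `< n` in `A`, so condition (i) says exactly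
that this subspace is trivial. An eigenvector killed by `h` lies in it; conversely, over the
algebraically closed field `ℂ` a nonzero invariant subspace contains an eigenvector of `A`.
-/

open Polynomial

namespace Module.End

variable {K V W : Type*} [Field K] [AddCommGroup V] [Module K V] [AddCommGroup W] [Module K W]

def unobservableSubspace (f : End K V) (g : V →ₗ[K] W) : Submodule K V :=
  ⨅ k : ℕ, LinearMap.ker (g ∘ₗ f ^ k)

variable {f : End K V} {g : V →ₗ[K] W} {x : V}

theorem mem_unobservableSubspace : x ∈ f.unobservableSubspace g ↔ ∀ k : ℕ, g ((f ^ k) x) = 0 := by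
  simp [unobservableSubspace]

theorem unobservableSubspace_le_ker : f.unobservableSubspace g ≤ LinearMap.ker g := fun x hx ↦ by
  simpa using mem_unobservableSubspace.mp hx 0

theorem apply_mem_unobservableSubspace (hx : x ∈ f.unobservableSubspace g) :
    f x ∈ f.unobservableSubspace g := by
  rw [mem_unobservableSubspace] at hx ⊢
  intro k
  simpa [pow_succ] using hx (k + 1)

theorem mem_unobservableSubspace_iff_forall_lt_finrank [FiniteDimensional K V] :
    x ∈ f.unobservableSubspace g ↔ ∀ k < Module.finrank K V, g ((f ^ k) x) = 0 := by
  refine ⟨fun hx k _ ↦ mem_unobservableSubspace.mp hx k, fun hx ↦ mem_unobservableSubspace.mpr ?_⟩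
  classical
  -- `L p = g (aeval f p x)` vanishes on `X ^ i` for `i < finrank K V`, hence on `degreeLT`.
  let L : K[X] →ₗ[K] W := g ∘ₗ LinearMap.applyₗ x ∘ₗ (aeval f).toLinearMap
  have hlow : degreeLT K (Module.finrank K V) ≤ LinearMap.ker L := by
    rw [degreeLT_eq_span_X_pow, Submodule.span_le]
    intro p hp
    obtain ⟨k, hk, rfl⟩ := Finset.mem_image.mp hp
    simpa [L] using hx k (Finset.mem_range.mp hk)
  intro k
  have hdeg : (X ^ k %ₘ f.charpoly) ∈ degreeLT K (Module.finrank K V) := by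
    rw [mem_degreeLT, ← f.charpoly_natDegree, ← degree_eq_natDegree f.charpoly_monic.ne_zero]
    exact degree_modByMonic_lt _ f.charpoly_monic
  simpa [L, ← LinearMap.pow_eq_aeval_mod_charpoly] using hlow hdeg

theorem exists_hasEigenvector_mem [IsAlgClosed K] [FiniteDimensional K V] {U : Submodule K V}
    (hU : ∀ x ∈ U, f x ∈ U) (hne : U ≠ ⊥) : ∃ μ v, v ∈ U ∧ f.HasEigenvector μ v := by
  have : Nontrivial U := Submodule.nontrivial_iff_ne_bot.mpr hne
  obtain ⟨μ, hμ⟩ := exists_eigenvalue (f.restrict hU)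
  obtain ⟨v, hv⟩ := hμ.exists_hasEigenvector
  refine ⟨μ, v, v.2, ?_, ?_⟩
  · simpa [mem_eigenspace_iff, Subtype.ext_iff] using hv.apply_eq_smul
  · simpa using hv.2

theorem unobservableSubspace_eq_bot_iff [IsAlgClosed K] [FiniteDimensional K V] :
    f.unobservableSubspace g = ⊥ ↔ ∀ μ v, f.HasEigenvector μ v → g v ≠ 0 := by
  refine ⟨fun hU μ v hv hgv ↦ hv.2 ?_, fun H ↦ by_contra fun hne ↦ ?_⟩
  · rw [← Submodule.mem_bot K, ← hU, mem_unobservableSubspace]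
    intro k
    simp [hv.pow_apply, hgv]
  · obtain ⟨μ, v, hvU, hv⟩ := exists_hasEigenvector_mem (fun _ ↦ apply_mem_unobservableSubspace) hne
    exact H μ v hv (unobservableSubspace_le_ker hvU)

end Module.End

open Module.End in
/-- The Kalman rank condition (trivial kernel of the stacked observability matrix) is
equivalent to the Hautus test: no eigenvector of `A` is annihilated by `h`. -/
theorem stmt_2 {n m : ℕ} (A : Matrix (Fin n) (Fin n) ℂ) (h : Matrix (Fin m) (Fin n) ℂ) :
    (∀ x : Fin n → ℂ, (∀ k : ℕ, k < n → h.mulVec ((A ^ k).mulVec x) = 0) → x = 0) ↔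
      (∀ (lam : ℂ) (v : Fin n → ℂ), v ≠ 0 → A.mulVec v = lam • v → h.mulVec v ≠ 0) := by
  have key := unobservableSubspace_eq_bot_iff (f := Matrix.toLin' A) (g := Matrix.toLin' h)
  simp only [Submodule.eq_bot_iff, mem_unobservableSubspace_iff_forall_lt_finrank,
    Module.finrank_fin_fun, ← Matrix.toLin'_pow, Matrix.toLin'_apply, hasEigenvector_iff,
    mem_eigenspace_iff] at key
  exact key.trans <| forall₂_congr fun _ _ ↦ and_imp.trans imp.swap
end

section
/- Let N = q·r with integers q ≥ 2 and r ≥ 1. Let A be the two-dimensional discrete periodic Laplacian acting on functions u : (ℤ/Nℤ)×(ℤ/Nℤ) → ℂ by (Au)(i,j) = u(i+1,j) + u(i−1,j) + u(i,j+1) + u(i,j−1) − 4u(i,j), and let h be the block-averaging tokenizer with block side q. Then there exist λ ∈ ℂ and a nonzero v with A·v = λ·v and h·v = 0 (explicitly, v(i,j) = exp(2πi·r·i/N) with λ = 2·cos(2πr/N) − 2 works), and consequently h·exp(tA)·v = 0 for all t ∈ ℝ. Hence the constant-coefficient discretized heat equation on the periodic N×N lattice is not observable under block averaging: the distinct initial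 states v and 0 produce identical tokenized output trajectories for all times. -/
/-!
The plane wave `ζ ^ i` with `ζ = exp (2πi / q)` is an eigenvector of the periodic Laplacian with
eigenvalue `ζ + ζ⁻¹ - 2 = 2 cos (2π / q) - 2`, and every block average of it contains the full
geometric sum `∑_{s < q} ζ ^ s`, which vanishes because `ζ` is a primitive `q`-th root of unity.
Since `exp (tA)` acts on an eigenvector of `A` by a scalar, the tokenized trajectory vanishes too.
-/

open NormedSpace Matrix Complex Finset

namespace Matrix

variable {n : Type*} [Fintype n] [DecidableEq n]

theorem pow_mulVec_of_mulVec_eq_smul {R : Type*} [CommSemiring R] {M : Matrix n n R}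
    {v : n → R} {μ : R} (hv : M *ᵥ v = μ • v) (k : ℕ) : (M ^ k) *ᵥ v = μ ^ k • v := by
  induction k with
  | zero => simp
  | succ k ih => rw [pow_succ', ← mulVec_mulVec, ih, mulVec_smul, hv, smul_smul, pow_succ]

attribute [local instance] Matrix.linftyOpNormedRing Matrix.linftyOpNormedAlgebra in
theorem exp_mulVec_of_mulVec_eq_smul {𝕂 : Type*} [RCLike 𝕂] {M : Matrix n n 𝕂} {v : n → 𝕂}
    {μ : 𝕂} (hv : M *ᵥ v = μ • v) : exp M *ᵥ v = exp μ • v := by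
  have hM := (exp_series_hasSum_exp' (𝕂 := 𝕂) M).map (mulVec.addMonoidHomLeft v)
    (continuous_id.matrix_mulVec continuous_const)
  have hμ := (exp_series_hasSum_exp' (𝕂 := 𝕂) μ).smul_const v
  refine hM.unique (hμ.congr_fun fun k => ?_)
  simp [mulVec.addMonoidHomLeft, smul_mulVec, pow_mulVec_of_mulVec_eq_smul hv, smul_smul]

end Matrix

section Lattice

variable {K : Type*} [Field K] {N : ℕ}

theorem pow_val_natCast_of_pow_eq_one {M : Type*} [Monoid M] {ζ : M} (hζ : ζ ^ N = 1) (m : ℕ) :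
    ζ ^ (m : ZMod N).val = ζ ^ m := by
  rw [ZMod.val_natCast, ← pow_eq_pow_mod _ hζ]

theorem pow_val_add_of_pow_eq_one [NeZero N] {M : Type*} [Monoid M] {ζ : M} (hζ : ζ ^ N = 1)
    (a b : ZMod N) : ζ ^ (a + b).val = ζ ^ a.val * ζ ^ b.val := by
  rw [ZMod.val_add, ← pow_eq_pow_mod _ hζ, pow_add]

def periodicLaplacian (u : ZMod N × ZMod N → K) (p : ZMod N × ZMod N) : K :=
  u (p.1 + 1, p.2) + u (p.1 - 1, p.2) + u (p.1, p.2 + 1) + u (p.1, p.2 - 1) - 4 * u p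

def blockAverage {r : ℕ} (q : ℕ) (u : ZMod N × ZMod N → K) (ab : ZMod r × ZMod r) : K :=
  (1 / (q : K) ^ 2) * ∑ s ∈ range q, ∑ s' ∈ range q,
    u (((ab.1.val * q + s : ℕ) : ZMod N), ((ab.2.val * q + s' : ℕ) : ZMod N))

def planeWave (ζ : K) (p : ZMod N × ZMod N) : K := ζ ^ p.1.val

theorem periodicLaplacian_planeWave [NeZero N] {ζ : K} (hζ : ζ ^ N = 1) (hζ0 : ζ ≠ 0) :
    periodicLaplacian (planeWave (N := N) ζ) = (ζ + ζ⁻¹ - 2) • planeWave ζ := by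
  have hstep (x : ZMod N) : ζ ^ (x + 1).val = ζ * ζ ^ x.val := by
    rw [pow_val_add_of_pow_eq_one hζ, mul_comm, ← Nat.cast_one,
      pow_val_natCast_of_pow_eq_one hζ, pow_one]
  funext p
  have hback : ζ ^ (p.1 - 1).val = ζ⁻¹ * ζ ^ p.1.val := by
    rw [eq_inv_mul_iff_mul_eq₀ hζ0, ← hstep, sub_add_cancel]
  simp only [periodicLaplacian, planeWave, hstep, hback, Pi.smul_apply, smul_eq_mul]
  ring

theorem blockAverage_planeWave {q r : ℕ} {ζ : K} (hζ : IsPrimitiveRoot ζ q) (hq : 1 < q)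
    (hqN : q ∣ N) : blockAverage q (planeWave (N := N) ζ) = (0 : ZMod r × ZMod r → K) := by
  have hζN : ζ ^ N = 1 := (hζ.pow_eq_one_iff_dvd N).2 hqN
  funext ab
  simp only [blockAverage, planeWave, pow_val_natCast_of_pow_eq_one hζN, pow_add, sum_const,
    card_range, nsmul_eq_mul, ← mul_sum, hζ.geom_sum_eq_zero hq]
  simp

end Lattice

theorem Complex.exp_mul_div_mul_eq_pow (q r k : ℕ) (hr : r ≠ 0) :
    cexp (2 * Real.pi * I * r * k / (q * r : ℕ)) = cexp (2 * Real.pi * I / q) ^ k := by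
  rw [← exp_nat_mul]
  congr 1
  push_cast
  field_simp

theorem Complex.ofReal_two_mul_cos (θ : ℝ) :
    ((2 * Real.cos θ : ℝ) : ℂ) = cexp (θ * I) + (cexp (θ * I))⁻¹ := by
  rw [← exp_neg, ← neg_mul]
  push_cast
  exact two_cos θ

theorem stmt_7_general (q r N : ℕ) (hq : 2 ≤ q) (hN : N = q * r)
    [NeZero N]
    (A : Matrix (ZMod N × ZMod N) (ZMod N × ZMod N) ℂ)
    (hA : ∀ (u : ZMod N × ZMod N → ℂ) (p : ZMod N × ZMod N),
      A.mulVec u p = u (p.1 + 1, p.2) + u (p.1 - 1, p.2) + u (p.1, p.2 + 1)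
        + u (p.1, p.2 - 1) - 4 * u p)
    (h : Matrix (ZMod r × ZMod r) (ZMod N × ZMod N) ℂ)
    (hh : ∀ (u : ZMod N × ZMod N → ℂ) (ab : ZMod r × ZMod r),
      h.mulVec u ab = (1 / (q : ℂ) ^ 2) *
        ∑ s ∈ Finset.range q, ∑ s' ∈ Finset.range q,
          u (((ab.1.val * q + s : ℕ) : ZMod N), ((ab.2.val * q + s' : ℕ) : ZMod N))) :
    ∃ (lam : ℂ) (v : ZMod N × ZMod N → ℂ),
      lam = ((2 * Real.cos (2 * Real.pi * r / N) - 2 : ℝ) : ℂ) ∧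
      (v = fun p => Complex.exp (2 * Real.pi * Complex.I * r * p.1.val / N)) ∧
      v ≠ 0 ∧ A.mulVec v = lam • v ∧ h.mulVec v = 0 ∧
      ∀ t : ℝ, h.mulVec ((NormedSpace.exp ((t : ℂ) • A)).mulVec v) = 0 := by
  subst hN
  have hr : r ≠ 0 := right_ne_zero_of_mul (NeZero.ne (q * r))
  set ζ := cexp (2 * Real.pi * I / q)
  have hζ : IsPrimitiveRoot ζ q := isPrimitiveRoot_exp q (by omega)
  have hv : (fun p : ZMod (q * r) × ZMod (q * r) =>
      cexp (2 * Real.pi * I * r * p.1.val / (q * r : ℕ))) = planeWave ζ :=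
    funext fun p => exp_mul_div_mul_eq_pow q r p.1.val hr
  have hlam : ((2 * Real.cos (2 * Real.pi * r / (q * r : ℕ)) - 2 : ℝ) : ℂ) = ζ + ζ⁻¹ - 2 := by
    have hθ : ((2 * Real.pi * r / (q * r : ℕ) : ℝ) : ℂ) * I = 2 * Real.pi * I / q := by
      push_cast
      field_simp
    rw [ofReal_sub, ofReal_two_mul_cos, hθ, ofReal_ofNat]
  have hAv : A *ᵥ planeWave ζ = (ζ + ζ⁻¹ - 2) • planeWave ζ := by
    rw [← periodicLaplacian_planeWave ((hζ.pow_eq_one_iff_dvd _).2 (dvd_mul_right q r))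
      (exp_ne_zero _)]
    exact funext (hA _)
  have hhv : h *ᵥ planeWave ζ = 0 := by
    rw [← blockAverage_planeWave hζ (by omega) (dvd_mul_right q r)]
    exact funext (hh _)
  refine ⟨_, _, hlam.symm, hv.symm, fun h0 => by simpa [planeWave] using congrFun h0 0, hAv, hhv,
    fun t => ?_⟩
  have htAv : ((t : ℂ) • A) *ᵥ planeWave ζ = ((t : ℂ) * (ζ + ζ⁻¹ - 2)) • planeWave ζ := by
    rw [smul_mulVec, hAv, smul_smul]
  rw [exp_mulVec_of_mulVec_eq_smul htAv, mulVec_smul, hhv, smul_zero]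

/-- The constant-coefficient discretized heat equation on the periodic `N × N` lattice,
`N = q·r`, is not observable under block averaging with block side `q`: there is an
eigenvector of the discrete Laplacian (explicitly the Fourier mode
`v (i,j) = exp(2πi r i / N)` with eigenvalue `2 cos(2πr/N) − 2`) annihilated by the
tokenizer, whence its tokenized output trajectory `t ↦ h·exp(tA)·v` vanishes identically. -/
theorem stmt_7 (q r N : ℕ) (hq : 2 ≤ q) (hr : 1 ≤ r) (hN : N = q * r)
    [NeZero N] [NeZero r]
    (A : Matrix (ZMod N × ZMod N) (ZMod N × ZMod N) ℂ)
    (hA : ∀ (u : ZMod N × ZMod N → ℂ) (p : ZMod N × ZMod N),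
      A.mulVec u p = u (p.1 + 1, p.2) + u (p.1 - 1, p.2) + u (p.1, p.2 + 1)
        + u (p.1, p.2 - 1) - 4 * u p)
    (h : Matrix (ZMod r × ZMod r) (ZMod N × ZMod N) ℂ)
    (hh : ∀ (u : ZMod N × ZMod N → ℂ) (ab : ZMod r × ZMod r),
      h.mulVec u ab = (1 / (q : ℂ) ^ 2) *
        ∑ s ∈ Finset.range q, ∑ s' ∈ Finset.range q,
          u (((ab.1.val * q + s : ℕ) : ZMod N), ((ab.2.val * q + s' : ℕ) : ZMod N))) :
    ∃ (lam : ℂ) (v : ZMod N × ZMod N → ℂ),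
      lam = ((2 * Real.cos (2 * Real.pi * r / N) - 2 : ℝ) : ℂ) ∧
      (v = fun p => Complex.exp (2 * Real.pi * Complex.I * r * p.1.val / N)) ∧
      v ≠ 0 ∧ A.mulVec v = lam • v ∧ h.mulVec v = 0 ∧
      ∀ t : ℝ, h.mulVec ((NormedSpace.exp ((t : ℂ) • A)).mulVec v) = 0 :=
  stmt_7_general q r N hq hN A hA h hh
end

section
/- Let A be a complex n×n matrix and h a complex m×n matrix, and suppose there exist μ ∈ ℂ and a nonzero v ∈ ℂⁿ with A·v = μ·v and h·v = 0. Let λ ∈ ℂ satisfy λ² = μ, and define the 2n×2n block matrix A_w = [[0, I],[A, 0]] and the m×2n block matrix h_w = [h, 0]. Then the nonzero vector w = (v, λ·v) ∈ ℂ^{2n} satisfies A_w·w = λ·w and h_w·w = 0; consequently h_w·exp(t·A_w)·w = 0 for all t ∈ ℝ, so the first-order system for the constant-coefficient lattice wave equation, observed through the tokenizer on the amplitude component only, is not observable. -/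
/-! Since `A v = λ² v`, the vector `w = (v, λ v)` is an eigenvector of `A_w` with eigenvalue `λ`,
hence `exp (t A_w) w = exp (t λ) w`, and `h_w w = h v = 0` kills the whole trajectory. -/

open NormedSpace Matrix

namespace Matrix

variable {ι : Type*} [Fintype ι] [DecidableEq ι]

theorem pow_mulVec_of_mulVec_eq_smul_s8 {R : Type*} [CommSemiring R] {B : Matrix ι ι R} {c : R}
    {w : ι → R} (hB : B *ᵥ w = c • w) (k : ℕ) : (B ^ k) *ᵥ w = c ^ k • w := by
  induction k with
  | zero => simp
  | succ k ih => rw [pow_succ, ← mulVec_mulVec, hB, mulVec_smul, ih, smul_smul, ← pow_succ']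

theorem exp_mulVec_of_mulVec_eq_smul_s8 {𝕂 : Type*} [RCLike 𝕂] {B : Matrix ι ι 𝕂} {c : 𝕂}
    {w : ι → 𝕂} (hB : B *ᵥ w = c • w) : exp B *ᵥ w = exp c • w := by
  let _ : NormedRing (Matrix ι ι 𝕂) := Matrix.linftyOpNormedRing
  let _ : NormedAlgebra 𝕂 (Matrix ι ι 𝕂) := Matrix.linftyOpNormedAlgebra
  -- Instance search does not see that the uniformity of this norm is the product one.
  have hexp := @exp_series_hasSum_exp' 𝕂 _ _ _ _ _ _ (FiniteDimensional.complete 𝕂 _) B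
  have hmatrix : HasSum (fun k => ((k.factorial : 𝕂)⁻¹ • B ^ k) *ᵥ w) (exp B *ᵥ w) :=
    hexp.map (mulVec.addMonoidHomLeft w)
      (continuous_id.matrix_mulVec continuous_const)
  have hscalar : HasSum (fun k => ((k.factorial : 𝕂)⁻¹ • B ^ k) *ᵥ w) (exp c • w) := by
    simpa only [smul_mulVec, pow_mulVec_of_mulVec_eq_smul_s8 hB, smul_smul, smul_eq_mul]
      using (exp_series_hasSum_exp' (𝕂 := 𝕂) c).smul_const w
  exact hmatrix.unique hscalar

theorem fromBlocks_zero_one_mulVec_sumElim {R : Type*} [CommSemiring R] {A : Matrix ι ι R}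
    {lam : R} {v : ι → R} (hAv : A *ᵥ v = lam ^ 2 • v) :
    fromBlocks 0 1 A 0 *ᵥ Sum.elim v (lam • v) = lam • Sum.elim v (lam • v) := by
  ext (i | i) <;> simp [fromBlocks_mulVec, hAv, pow_two, mul_assoc]

end Matrix

/-- If `(A, h)` has an eigenvector `v` (eigenvalue `μ`) annihilated by `h`, and `λ² = μ`,
then `w = (v, λv)` is a nonzero eigenvector of the first-order wave operator
`A_w = [[0, I], [A, 0]]` annihilated by the amplitude-only tokenizer `h_w = [h, 0]`;
consequently the tokenized output trajectory of `w` vanishes identically, so the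
first-order lattice wave system is not observable. -/
theorem stmt_8 {n m : ℕ} (A : Matrix (Fin n) (Fin n) ℂ) (h : Matrix (Fin m) (Fin n) ℂ)
    (mu lam : ℂ) (v : Fin n → ℂ) (hv : v ≠ 0) (hAv : A.mulVec v = mu • v)
    (hhv : h.mulVec v = 0) (hlam : lam ^ 2 = mu)
    (Aw : Matrix (Fin n ⊕ Fin n) (Fin n ⊕ Fin n) ℂ)
    (hAw : Aw = Matrix.fromBlocks 0 1 A 0)
    (hw : Matrix (Fin m) (Fin n ⊕ Fin n) ℂ)
    (hhw : hw = Matrix.of fun i j => Sum.elim (fun j₁ => h i j₁) (fun _ => 0) j)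
    (w : Fin n ⊕ Fin n → ℂ) (hwdef : w = Sum.elim v (lam • v)) :
    w ≠ 0 ∧ Aw.mulVec w = lam • w ∧ hw.mulVec w = 0 ∧
      ∀ t : ℝ, hw.mulVec ((NormedSpace.exp ((t : ℂ) • Aw)).mulVec w) = 0 := by
  subst hAw hwdef hlam
  have hw_eq : hw = fromCols h 0 := hhw
  have hw_ne : Sum.elim v (lam • v) ≠ 0 := fun h0 =>
    hv (by simpa using congrArg (· ∘ Sum.inl) h0)
  have heigen := fromBlocks_zero_one_mulVec_sumElim hAv
  have hobs : hw *ᵥ Sum.elim v (lam • v) = 0 := by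
    rw [hw_eq, fromCols_mulVec_sumElim, hhv, zero_mulVec, add_zero]
  refine ⟨hw_ne, heigen, hobs, fun t => ?_⟩
  have ht : ((t : ℂ) • fromBlocks 0 1 A 0) *ᵥ Sum.elim v (lam • v) =
      ((t : ℂ) * lam) • Sum.elim v (lam • v) := by
    rw [smul_mulVec, heigen, smul_smul]
  rw [exp_mulVec_of_mulVec_eq_smul_s8 ht, mulVec_smul, hobs, smul_zero]
end

section
/- Let A be a real n×n matrix, h a real m×n matrix, and T > 0. Define the observability Gramian Q(T) = ∫₀ᵀ exp(sAᵀ)·hᵀ·h·exp(sA) ds (a Bochner integral of matrix-valued functions). Then for every x ∈ ℝⁿ, xᵀ·Q(T)·x = ∫₀ᵀ ‖h·exp(sA)·x‖² ds, and Q(T) is positive definite if and only if for every nonzero x ∈ ℝⁿ there exists s ∈ [0, T] with h·exp(sA)·x ≠ 0. -/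
/-!
For `C s = h * exp (s • A)` the Gramian integrand is `(C s)ᵀ * C s`, so `xᵀ Q(T) x` is the integral
of `|C s x|²`. That integrand is continuous and nonnegative, hence its integral over `[0, T]`,
`T > 0`, vanishes exactly when `C s x = 0` for all `s ∈ [0, T]`; `Q(T)` is symmetric, so positive
definiteness is positivity of this integral for every `x ≠ 0`.
-/

open NormedSpace Matrix MeasureTheory

theorem intervalIntegral.integral_pos_iff_exists_ne_zero {f : ℝ → ℝ} {a b : ℝ} (hab : a < b)
    (hf : ContinuousOn f (Set.Icc a b)) (hf₀ : ∀ x ∈ Set.Icc a b, 0 ≤ f x) :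
    0 < ∫ x in a..b, f x ↔ ∃ x ∈ Set.Icc a b, f x ≠ 0 := by
  refine ⟨fun hpos => ?_, fun ⟨c, hc, hfc⟩ => ?_⟩
  · by_contra! hzero
    have hint : ∫ x in a..b, f x = 0 :=
      (intervalIntegral.integral_congr (g := fun _ => 0) fun x hx =>
        hzero x (Set.uIcc_of_le hab.le ▸ hx)).trans intervalIntegral.integral_zero
    exact hpos.ne' hint
  · exact intervalIntegral.integral_pos hab hf (fun x hx => hf₀ x (Set.Ioc_subset_Icc_self hx))
      ⟨c, hc, (hf₀ c hc).lt_of_ne' hfc⟩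

namespace Matrix

variable {ι κ : Type*} [Fintype ι] [Fintype κ]

/-- `exp` does not depend on the choice of norm, so any algebra norm inducing the entrywise
topology (here the `L∞` operator norm) gives its continuity. -/
theorem continuous_exp [DecidableEq ι] : Continuous (exp : Matrix ι ι ℝ → Matrix ι ι ℝ) :=
  open scoped Norms.Operator in exp_continuous

theorem dotProduct_mulVec_of_intervalIntegral {M : ℝ → Matrix ι ι ℝ} {μ : Measure ℝ} {a b : ℝ}
    (hM : ∀ i j, IntervalIntegrable (fun s => M s i j) μ a b) (v w : ι → ℝ) :
    v ⬝ᵥ (of fun i j => ∫ s in a..b, M s i j ∂μ) *ᵥ w = ∫ s in a..b, v ⬝ᵥ M s *ᵥ w ∂μ := by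
  simp only [dotProduct, mulVec, of_apply, Finset.mul_sum, ← intervalIntegral.integral_mul_const,
    ← intervalIntegral.integral_const_mul]
  have hint (i j : ι) : IntervalIntegrable (fun s => v i * (M s i j * w j)) μ a b :=
    ((hM i j).mul_const _).const_mul _
  have hint_sum (i : ι) : IntervalIntegrable (fun s => ∑ j, v i * (M s i j * w j)) μ a b := by
    simpa only [Finset.sum_fn] using IntervalIntegrable.sum _ fun j _ => hint i j
  exact ((intervalIntegral.integral_finsetSum fun i _ => hint_sum i).trans
    (Finset.sum_congr rfl fun i _ =>
      intervalIntegral.integral_finsetSum fun j _ => hint i j)).symm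

omit [Fintype ι] in
theorem isSymm_of_intervalIntegral {M : ℝ → Matrix ι ι ℝ} {μ : Measure ℝ} {a b : ℝ}
    (hM : ∀ s, (M s).IsSymm) : (of fun i j => ∫ s in a..b, M s i j ∂μ).IsSymm :=
  IsSymm.ext fun i j => intervalIntegral.integral_congr fun s _ => (hM s).apply i j

theorem dotProduct_mulVec_transpose_mul_self {R : Type*} [CommSemiring R]
    (C : Matrix κ ι R) (x : ι → R) : x ⬝ᵥ (Cᵀ * C) *ᵥ x = C *ᵥ x ⬝ᵥ C *ᵥ x := by
  rw [← mulVec_mulVec, dotProduct_mulVec, vecMul_transpose]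

noncomputable def gramian (C : ℝ → Matrix κ ι ℝ) (a b : ℝ) : Matrix ι ι ℝ :=
  of fun i j => ∫ s in a..b, ((C s)ᵀ * C s) i j

variable {C : ℝ → Matrix κ ι ℝ} {a b : ℝ}

theorem dotProduct_gramian_mulVec (hC : Continuous C) (x : ι → ℝ) :
    x ⬝ᵥ gramian C a b *ᵥ x = ∫ s in a..b, C s *ᵥ x ⬝ᵥ C s *ᵥ x := by
  rw [gramian, dotProduct_mulVec_of_intervalIntegral fun i j =>
    ((hC.matrix_transpose.matrix_mul hC).matrix_elem i j).intervalIntegrable a b]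
  simp only [dotProduct_mulVec_transpose_mul_self]

omit [Fintype ι] in
theorem isSymm_gramian : (gramian C a b).IsSymm :=
  isSymm_of_intervalIntegral fun s => by rw [IsSymm, transpose_mul, transpose_transpose]

theorem posDef_gramian_iff (hC : Continuous C) (hab : a < b) :
    (gramian C a b).PosDef ↔ ∀ x : ι → ℝ, x ≠ 0 → ∃ s ∈ Set.Icc a b, C s *ᵥ x ≠ 0 := by
  rw [posDef_iff_dotProduct_mulVec, isHermitian_iff_isSymm, and_iff_right isSymm_gramian]
  refine forall₂_congr fun x _ => ?_
  have hcont : Continuous fun s => C s *ᵥ x ⬝ᵥ C s *ᵥ x :=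
    (hC.matrix_mulVec continuous_const).dotProduct (hC.matrix_mulVec continuous_const)
  rw [star_trivial, dotProduct_gramian_mulVec hC, intervalIntegral.integral_pos_iff_exists_ne_zero
    hab hcont.continuousOn fun s _ => Finset.sum_nonneg fun i _ => mul_self_nonneg _]
  simp only [ne_eq, dotProduct_self_eq_zero]

end Matrix

/-- The observability Gramian `Q(T) = ∫₀ᵀ exp(sAᵀ)·hᵀ·h·exp(sA) ds` satisfies
`xᵀ Q(T) x = ∫₀ᵀ ‖h exp(sA) x‖² ds` (Euclidean squared norm written as a dot product),
and `Q(T)` is positive definite iff every nonzero initial state produces a not-identically-zero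
output on `[0, T]`. -/
theorem stmt_12 {n m : ℕ} (A : Matrix (Fin n) (Fin n) ℝ) (h : Matrix (Fin m) (Fin n) ℝ)
    (T : ℝ) (hT : 0 < T) (Q : Matrix (Fin n) (Fin n) ℝ)
    (hQ : Q = Matrix.of fun i j =>
      ∫ s in (0:ℝ)..T, ((NormedSpace.exp (s • A))ᵀ * hᵀ * h * NormedSpace.exp (s • A)) i j) :
    (∀ x : Fin n → ℝ,
      x ⬝ᵥ Q.mulVec x =
        ∫ s in (0:ℝ)..T,
          (h.mulVec ((NormedSpace.exp (s • A)).mulVec x)) ⬝ᵥ (h.mulVec ((NormedSpace.exp (s • A)).mulVec x))) ∧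
    (Q.PosDef ↔
      ∀ x : Fin n → ℝ, x ≠ 0 →
        ∃ s ∈ Set.Icc (0:ℝ) T, h.mulVec ((NormedSpace.exp (s • A)).mulVec x) ≠ 0) := by
  have hC : Continuous fun s : ℝ => h * exp (s • A) :=
    continuous_const.matrix_mul (continuous_exp.comp (continuous_id.smul continuous_const))
  have hQ_gramian : Q = gramian (fun s => h * exp (s • A)) 0 T := by
    simp only [hQ, gramian, transpose_mul, Matrix.mul_assoc]
  subst hQ_gramian
  simp only [dotProduct_gramian_mulVec hC, posDef_gramian_iff hC hT, mulVec_mulVec,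
    implies_true, and_self]
end
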